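/- Let 1/2 ≤ α < 2/3 and consider an instance of the FSSP with two agents and separate item sets in which every item weight is at most α. Then every maximin fair solution x_MM satisfies z* − z(x_MM) ≤ (1/2) · z*. -/
import Mathlib


/-! Definitions for the Fair Subset Sum Problem (FSSP) with two agents `A` and `B`
owning separate item sets with weights `a : Fin n → ℝ` and `b : Fin m → ℝ`.
A solution is a pair of index subsets; feasibility means the total selected
weight does not exceed the capacity `1`. -/

/-- Total weight of the items of `S`. -/
noncomputable def sumw {n : ℕ} (a : Fin n → ℝ) (S : Finset (Fin n)) : ℝ := ∑ i ∈ S, a i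

/-- A feasible solution of FSSP with separate item sets. -/
def Feas {n m : ℕ} (a : Fin n → ℝ) (b : Fin m → ℝ)
    (x : Finset (Fin n) × Finset (Fin m)) : Prop :=
  sumw a x.1 + sumw b x.2 ≤ 1

/-- Social utility `z(x) = a(x) + b(x)`. -/
noncomputable def zv {n m : ℕ} (a : Fin n → ℝ) (b : Fin m → ℝ)
    (x : Finset (Fin n) × Finset (Fin m)) : ℝ :=
  sumw a x.1 + sumw b x.2

/-- Pareto efficient feasible solution. -/
def Pareto {n m : ℕ} (a : Fin n → ℝ) (b : Fin m → ℝ)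
    (x : Finset (Fin n) × Finset (Fin m)) : Prop :=
  Feas a b x ∧ ¬ ∃ y, Feas a b y ∧ sumw a x.1 ≤ sumw a y.1 ∧ sumw b x.2 ≤ sumw b y.2 ∧
    (sumw a x.1 < sumw a y.1 ∨ sumw b x.2 < sumw b y.2)

/-- System optimum: a feasible solution maximizing the social utility. -/
def SysOpt {n m : ℕ} (a : Fin n → ℝ) (b : Fin m → ℝ)
    (x : Finset (Fin n) × Finset (Fin m)) : Prop :=
  Feas a b x ∧ ∀ y, Feas a b y → zv a b y ≤ zv a b x

/-- Maximin fair solution: Pareto efficient and maximizing `min{a(x), b(x)}`. -/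
def Maximin {n m : ℕ} (a : Fin n → ℝ) (b : Fin m → ℝ)
    (x : Finset (Fin n) × Finset (Fin m)) : Prop :=
  Pareto a b x ∧ ∀ y, Feas a b y →
    min (sumw a y.1) (sumw b y.2) ≤ min (sumw a x.1) (sumw b x.2)

/-- Proportional fair solution. -/
def PropFair {n m : ℕ} (a : Fin n → ℝ) (b : Fin m → ℝ)
    (x : Finset (Fin n) × Finset (Fin m)) : Prop :=
  Feas a b x ∧ 0 < sumw a x.1 ∧ 0 < sumw b x.2 ∧
    ∀ y, Feas a b y → sumw a y.1 / sumw a x.1 + sumw b y.2 / sumw b x.2 ≤ 2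

/-- Kalai–Smorodinski fair solution: Pareto efficient and maximizing
`min{a(x)/â, b(x)/b̂}`, where `â` and `b̂` are the (positive) maximal utilities
each agent can obtain over all feasible solutions. -/
def KSFair {n m : ℕ} (a : Fin n → ℝ) (b : Fin m → ℝ)
    (x : Finset (Fin n) × Finset (Fin m)) : Prop :=
  Pareto a b x ∧ ∃ ahat bhat : ℝ, 0 < ahat ∧ 0 < bhat ∧
    IsGreatest {v | ∃ y, Feas a b y ∧ sumw a y.1 = v} ahat ∧
    IsGreatest {v | ∃ y, Feas a b y ∧ sumw b y.2 = v} bhat ∧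
    ∀ y, Feas a b y →
      min (sumw a y.1 / ahat) (sumw b y.2 / bhat) ≤
        min (sumw a x.1 / ahat) (sumw b x.2 / bhat)

/-- A valid FSSP instance with separate item sets in which every item weight is
nonnegative and at most `α`, and the total weight exceeds the capacity `1`. -/
def ValidInst {n m : ℕ} (a : Fin n → ℝ) (b : Fin m → ℝ) (α : ℝ) : Prop :=
  (∀ i, 0 ≤ a i) ∧ (∀ i, 0 ≤ b i) ∧ (∀ i, a i ≤ α) ∧ (∀ i, b i ≤ α) ∧
    1 < (∑ i, a i) + (∑ i, b i)

lemma pareto_insA {n m : ℕ} (a : Fin n → ℝ) (b : Fin m → ℝ)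
    (x : Finset (Fin n) × Finset (Fin m)) (hp : Pareto a b x)
    (i : Fin n) (hi : i ∉ x.1) (hip : 0 < a i) :
    1 < sumw a x.1 + sumw b x.2 + a i := by
  by_contra h
  push_neg at h
  refine hp.2 ⟨(insert i x.1, x.2), ?_, ?_, le_refl _, Or.inl ?_⟩
  · show sumw a (insert i x.1) + sumw b x.2 ≤ 1
    unfold sumw at h ⊢
    rw [Finset.sum_insert hi]
    linarith
  · show sumw a x.1 ≤ sumw a (insert i x.1)
    unfold sumw
    rw [Finset.sum_insert hi]
    linarith
  · show sumw a x.1 < sumw a (insert i x.1)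
    unfold sumw
    rw [Finset.sum_insert hi]
    linarith

lemma pareto_snA {n m : ℕ} (a : Fin n → ℝ) (b : Fin m → ℝ)
    (x : Finset (Fin n) × Finset (Fin m)) (hp : Pareto a b x)
    (hzhalf : sumw a x.1 + sumw b x.2 < 1/2)
    (hax : 0 ≤ sumw a x.1) (hbx : 0 ≤ sumw b x.2)
    (i : Fin n) (hi : i ∉ x.1) (hip : 0 < a i) :
    1 < a i + sumw b x.2 := by
  have h1 := pareto_insA a b x hp i hi hip
  by_contra h
  push_neg at h
  have hlt : sumw a x.1 < a i := by linarith
  have hlt' : sumw a x.1 < sumw a ({i}, x.2).1 := by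
    show sumw a x.1 < sumw a {i}
    unfold sumw
    rw [Finset.sum_singleton]
    exact hlt
  refine hp.2 ⟨({i}, x.2), ?_, le_of_lt hlt', le_refl _, Or.inl hlt'⟩
  show sumw a {i} + sumw b x.2 ≤ 1
  unfold sumw
  rw [Finset.sum_singleton]
  exact h

lemma Pareto_swap {n m : ℕ} (a : Fin n → ℝ) (b : Fin m → ℝ)
    (x : Finset (Fin n) × Finset (Fin m)) (hp : Pareto a b x) :
    Pareto b a (x.2, x.1) := by
  obtain ⟨hf, hnp⟩ := hp
  unfold Feas at hf
  constructor
  · show sumw b x.2 + sumw a x.1 ≤ 1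
    linarith
  · rintro ⟨y, hyf, h1, h2, h3⟩
    unfold Feas at hyf
    refine hnp ⟨(y.2, y.1), ?_, h2, h1, h3.symm⟩
    show sumw a y.2 + sumw b y.1 ≤ 1
    linarith

lemma SysOpt_swap {n m : ℕ} (a : Fin n → ℝ) (b : Fin m → ℝ)
    (x : Finset (Fin n) × Finset (Fin m)) (h : SysOpt a b x) :
    SysOpt b a (x.2, x.1) := by
  obtain ⟨hf, hmax⟩ := h
  unfold Feas at hf
  constructor
  · show sumw b x.2 + sumw a x.1 ≤ 1
    linarith
  · intro y hyf
    unfold Feas at hyf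
    have := hmax (y.2, y.1) (by
      show sumw a y.2 + sumw b y.1 ≤ 1
      linarith)
    unfold zv at this ⊢
    dsimp only at this ⊢
    linarith

lemma Maximin_swap {n m : ℕ} (a : Fin n → ℝ) (b : Fin m → ℝ)
    (x : Finset (Fin n) × Finset (Fin m)) (h : Maximin a b x) :
    Maximin b a (x.2, x.1) := by
  obtain ⟨hp, hm⟩ := h
  refine ⟨Pareto_swap a b x hp, ?_⟩
  intro y hyf
  unfold Feas at hyf
  have := hm (y.2, y.1) (by
    show sumw a y.2 + sumw b y.1 ≤ 1
    linarith)
  dsimp only at this ⊢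
  rw [min_comm (sumw b y.1), min_comm (sumw b x.2)]
  exact this

lemma ValidInst_swap {n m : ℕ} (a : Fin n → ℝ) (b : Fin m → ℝ) (α : ℝ)
    (h : ValidInst a b α) : ValidInst b a α := by
  obtain ⟨h1, h2, h3, h4, h5⟩ := h
  exact ⟨h2, h1, h4, h3, by linarith⟩

lemma key_maximin {n m : ℕ} (α : ℝ) (hα0 : 1/2 ≤ α) (hα1 : α < 2/3)
    (a : Fin n → ℝ) (b : Fin m → ℝ) (hinst : ValidInst a b α)
    (xopt : Finset (Fin n) × Finset (Fin m)) (hopt : SysOpt a b xopt)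
    (xMM : Finset (Fin n) × Finset (Fin m)) (hMM : Maximin a b xMM)
    (hz : zv a b xMM < zv a b xopt / 2)
    (i : Fin n) (hi : i ∉ xMM.1) (hip : 0 < a i) : False := by
  obtain ⟨ha0, hb0, haα, hbα, htot⟩ := hinst
  have hfeas := hMM.1.1
  have hax0 : (0:ℝ) ≤ sumw a xMM.1 := Finset.sum_nonneg fun k _ => ha0 k
  have hbx0 : (0:ℝ) ≤ sumw b xMM.2 := Finset.sum_nonneg fun k _ => hb0 k
  have hastar0 : (0:ℝ) ≤ sumw a xopt.1 := Finset.sum_nonneg fun k _ => ha0 k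
  have hbstar0 : (0:ℝ) ≤ sumw b xopt.2 := Finset.sum_nonneg fun k _ => hb0 k
  have hzs1 : zv a b xopt ≤ 1 := hopt.1
  have hzle : zv a b xMM ≤ zv a b xopt := hopt.2 _ hfeas
  unfold zv at hzs1 hzle hz
  have hzhalf : sumw a xMM.1 + sumw b xMM.2 < 1/2 := by linarith
  have h1 := pareto_insA a b xMM hMM.1 i hi hip
  have h2 := pareto_snA a b xMM hMM.1 hzhalf hax0 hbx0 i hi hip
  have hbxlb : 1 - α < sumw b xMM.2 := by
    have := haα i
    linarith
  -- every unselected item of B has weight 0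
  have hB0 : ∀ j, j ∉ xMM.2 → b j = 0 := by
    intro j hj
    by_contra hne
    have hjp : 0 < b j := lt_of_le_of_ne (hb0 j) (Ne.symm hne)
    have h3 := pareto_snA b a (xMM.2, xMM.1) (Pareto_swap a b xMM hMM.1)
      (by dsimp only; linarith) hbx0 hax0 j hj hjp
    dsimp only at h3
    have := hbα j
    linarith
  have hBsum : ∑ j, b j = sumw b xMM.2 := by
    rw [← Finset.sum_add_sum_compl xMM.2 b]
    have hc : ∑ j ∈ xMM.2ᶜ, b j = 0 :=
      Finset.sum_eq_zero fun j hj => hB0 j (Finset.mem_compl.mp hj)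
    rw [hc]
    unfold sumw
    ring
  have hbstar : sumw b xopt.2 ≤ sumw b xMM.2 := by
    have : sumw b xopt.2 ≤ ∑ j, b j :=
      Finset.sum_le_sum_of_subset_of_nonneg (Finset.subset_univ _) (fun k _ _ => hb0 k)
    linarith [this, hBsum.le, hBsum.ge]
  -- a* ≤ ax + α
  have hUbound : ∀ k ∈ xopt.1 \ xMM.1, a k ≠ 0 → 1/2 < a k := by
    intro k hk hne
    have hk1 : k ∉ xMM.1 := (Finset.mem_sdiff.mp hk).2
    have hkp : 0 < a k := lt_of_le_of_ne (ha0 k) (Ne.symm hne)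
    have := pareto_insA a b xMM hMM.1 k hk1 hkp
    linarith
  have hUle : sumw a (xopt.1 \ xMM.1) ≤ α := by
    set U' := (xopt.1 \ xMM.1).filter (fun k => a k ≠ 0) with hU'def
    have hsumU : ∑ k ∈ U', a k = sumw a (xopt.1 \ xMM.1) :=
      Finset.sum_filter_ne_zero _
    have hcard : U'.card ≤ 1 := by
      by_contra hcard
      push_neg at hcard
      obtain ⟨k, hk, l, hl, hkl⟩ := Finset.one_lt_card.mp hcard
      have hkm := Finset.mem_filter.mp hk
      have hlm := Finset.mem_filter.mp hl
      have hk2 := hUbound k hkm.1 hkm.2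
      have hl2 := hUbound l hlm.1 hlm.2
      have hsub : ({k, l} : Finset (Fin n)) ⊆ xopt.1 := by
        intro t ht
        rcases Finset.mem_insert.mp ht with h | h
        · rw [h]; exact (Finset.mem_sdiff.mp hkm.1).1
        · rw [Finset.mem_singleton] at h; rw [h]; exact (Finset.mem_sdiff.mp hlm.1).1
      have hsum : a k + a l ≤ sumw a xopt.1 := by
        have e : a k + a l = ∑ t ∈ ({k, l} : Finset (Fin n)), a t :=
          (Finset.sum_pair hkl).symm
        rw [e]
        exact Finset.sum_le_sum_of_subset_of_nonneg hsub (fun t _ _ => ha0 t)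
      linarith
    rcases Finset.eq_empty_or_nonempty U' with he | ⟨x0, hx0m⟩
    · rw [← hsumU, he]
      simp only [Finset.sum_empty]
      linarith
    have hx0 : U' ⊆ {x0} := by
      intro t ht
      rw [Finset.mem_singleton]
      exact Finset.card_le_one_iff.mp hcard ht hx0m
    have hle : ∑ k ∈ U', a k ≤ a x0 := by
      have h1 : ∑ k ∈ U', a k ≤ ∑ k ∈ ({x0} : Finset (Fin n)), a k :=
        Finset.sum_le_sum_of_subset_of_nonneg hx0 (fun t _ _ => ha0 t)
      rwa [Finset.sum_singleton] at h1
    rw [← hsumU]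
    linarith [haα x0]
  have hS : sumw a (xopt.1 ∩ xMM.1) ≤ sumw a xMM.1 :=
    Finset.sum_le_sum_of_subset_of_nonneg Finset.inter_subset_right (fun k _ _ => ha0 k)
  have hsplit : sumw a (xopt.1 ∩ xMM.1) + sumw a (xopt.1 \ xMM.1) = sumw a xopt.1 :=
    Finset.sum_inter_add_sum_sdiff _ _ _
  have hastar : sumw a xopt.1 ≤ sumw a xMM.1 + α := by linarith
  -- maximin against xopt
  have hmin := hMM.2 xopt hopt.1
  have haxbx : sumw a xMM.1 ≤ sumw b xMM.2 := by linarith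
  rw [min_eq_left haxbx] at hmin
  rcases min_le_iff.mp hmin with hca | hcb
  · linarith
  · linarith

/-- For `1/2 ≤ α < 2/3`, every maximin fair solution of an FSSP instance with
separate item sets and item weights at most `α` satisfies
`z* - z(x_MM) ≤ (1/2) · z*`. -/
theorem pof_maximin_medium_alpha (α : ℝ) (hα0 : 1/2 ≤ α) (hα1 : α < 2/3)
    {n m : ℕ} (a : Fin n → ℝ) (b : Fin m → ℝ) (hinst : ValidInst a b α)
    (xopt : Finset (Fin n) × Finset (Fin m)) (hopt : SysOpt a b xopt)
    (xMM : Finset (Fin n) × Finset (Fin m)) (hMM : Maximin a b xMM) :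
    zv a b xopt - zv a b xMM ≤ (1/2) * zv a b xopt := by
  by_contra hcon
  push_neg at hcon
  have hz : zv a b xMM < zv a b xopt / 2 := by linarith
  have hex : (∃ i, i ∉ xMM.1 ∧ 0 < a i) ∨ (∃ j, j ∉ xMM.2 ∧ 0 < b j) := by
    by_contra h
    push_neg at h
    obtain ⟨hA, hB⟩ := h
    obtain ⟨ha0, hb0, _, _, htot⟩ := hinst
    have hA' : ∑ i ∈ xMM.1ᶜ, a i = 0 :=
      Finset.sum_eq_zero fun i hi => le_antisymm (hA i (Finset.mem_compl.mp hi)) (ha0 i)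
    have hB' : ∑ j ∈ xMM.2ᶜ, b j = 0 :=
      Finset.sum_eq_zero fun j hj => le_antisymm (hB j (Finset.mem_compl.mp hj)) (hb0 j)
    have e1 : ∑ i, a i = sumw a xMM.1 := by
      rw [← Finset.sum_add_sum_compl xMM.1 a, hA']
      unfold sumw; ring
    have e2 : ∑ j, b j = sumw b xMM.2 := by
      rw [← Finset.sum_add_sum_compl xMM.2 b, hB']
      unfold sumw; ring
    have hf := hMM.1.1
    unfold Feas at hf
    linarith
  rcases hex with ⟨i, hi, hip⟩ | ⟨j, hj, hjp⟩
  · exact key_maximin α hα0 hα1 a b hinst xopt hopt xMM hMM hz i hi hip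
  · refine key_maximin α hα0 hα1 b a (ValidInst_swap a b α hinst) (xopt.2, xopt.1)
      (SysOpt_swap a b xopt hopt) (xMM.2, xMM.1) (Maximin_swap a b xMM hMM) ?_ j hj hjp
    unfold zv at hz ⊢
    dsimp only
    linarith
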